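/- Let 1 < q < p < ∞ and 0 < s < 1. If a nonempty set E ⊂ X satisfies the upper Aikawa condition with exponent α = sq, then the upper Assouad codimension of E is at most sp. -/

import Mathlib

open Metric MeasureTheory Set
open scoped ENNReal NNReal

noncomputable def diamBound {X : Type*} [PseudoEMetricSpace X] (E : Set X) : ℝ≥0∞ :=
  haveI := Classical.propDecidable
  if EMetric.diam E = 0 then EMetric.diam (Set.univ : Set X) else EMetric.diam E

def upperAikawaCond {X : Type*} [MetricSpace X] [MeasurableSpace X]
    (μ : Measure X) (E : Set X) (α : ℝ) : Prop :=
  ∀ ε : ℝ, 0 < ε → ∃ δ : ℝ, 0 < δ ∧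
    ∀ z ∈ E, ∀ R : ℝ, 0 < R → ENNReal.ofReal R < diamBound E →
      ∀ K : Set X, MeasurableSet K →
        μ (ball z R \ K) ≤ ENNReal.ofReal δ * μ (ball z R) →
        ENNReal.ofReal (R ^ (-α) / ε) ≤
          (μ (ball z R))⁻¹ *
            ∫⁻ y in ball z R ∩ K, ENNReal.ofReal (infDist y E ^ (-α)) ∂μ

noncomputable def upperAssouadCodim {X : Type*} [MetricSpace X] [MeasurableSpace X]
    (μ : Measure X) (E : Set X) : ℝ :=
  sInf {Q : ℝ | 0 ≤ Q ∧ ∃ c : ℝ, 0 < c ∧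
    ∀ z ∈ E, ∀ r R : ℝ, 0 < r → r < R → ENNReal.ofReal R < diamBound E →
      ENNReal.ofReal (c * (r / R) ^ Q) * μ (ball z R) ≤
        μ ({x | infDist x E < r} ∩ ball z R)}

/-!
Write `E_r = {infDist · E < r}` and `B = ball w ρ` with `w ∈ E`; the bound
`μ (E_r ∩ 2B) ≥ δ (r/ρ)^β μ B` is proved by induction on `log₂ (ρ/r)`. Either `E_r` already fills a
`δ`-fraction of `B`, or the Aikawa condition for `K = (E_r)ᶜ` gives
`∫_{B \ E_r} infDist^(-α) ≥ ρ^(-α) μ B / ε`. Split `B \ E_r` into the far part `infDist > ρ/4` and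
the shells `{s/2 < infDist ≤ s}`, `s = ρ/2^(n+2)`. Since `α < β`, if every shell had mass below
`C^4 (s/ρ)^β μ B`, the integral would be at most a convergent geometric series times `ρ^(-α) μ B`,
too little for small `ε`. A heavy shell is covered, via Vitali and doubling, by disjoint balls
`ball xᵢ (2s)` centred on `E`, where the induction hypothesis at the scale `s ≤ ρ/4` applies.
-/

lemma Set.PairwiseDisjoint.countable_of_measure_pos {Ω ι : Type*} [MeasurableSpace Ω]
    {μ : Measure Ω} {u : Set ι} {f : ι → Set Ω} (hu : u.PairwiseDisjoint f)
    (hf : ∀ i ∈ u, MeasurableSet (f i)) (hpos : ∀ i ∈ u, 0 < μ (f i))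
    (hfin : μ (⋃ i ∈ u, f i) ≠ ⊤) : u.Countable := by
  have hcount := Measure.countable_meas_pos_of_disjoint_of_meas_iUnion_ne_top μ
    (As := fun i : u => f i) (fun i => hf i i.2)
    (fun i j hij => hu i.2 j.2 (Subtype.coe_ne_coe.2 hij)) (by rwa [iUnion_subtype])
  rw [show {i : u | 0 < μ (f i)} = univ from eq_univ_of_forall fun i => hpos i i.2] at hcount
  exact countable_coe_iff.1 (countable_univ_iff.1 hcount)

section

variable {X : Type*} [MetricSpace X]

def infDistShell (E : Set X) (s : ℝ) : Set X :=
  {y | s / 2 < infDist y E ∧ infDist y E ≤ s}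

lemma exists_mem_infDistShell_div_pow {E : Set X} {y : X} {s : ℝ} (h0 : 0 < infDist y E)
    (hs : infDist y E ≤ s) : ∃ n : ℕ, y ∈ infDistShell E (s / 2 ^ n) := by
  obtain ⟨n, hn, hn'⟩ := exists_nat_pow_near ((one_le_div h0).2 hs) one_lt_two
  refine ⟨n, ?_, ?_⟩
  · rw [div_div, ← pow_succ, div_lt_iff₀ (by positivity)]
    rwa [div_lt_iff₀ h0, mul_comm] at hn'
  · rwa [le_div_iff₀ (by positivity), mul_comm, ← le_div_iff₀ h0]

lemma infDistShell_weight_le {α β ρ : ℝ} (hαβ : α ≤ β) (hρ : 0 < ρ) (n : ℕ) :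
    (ρ / 4 / 2 ^ n / 2) ^ (-α) * (ρ / 4 / 2 ^ n / ρ) ^ β ≤
      ρ ^ (-α) * 2 ^ α * ((2 : ℝ) ^ (α - β)) ^ n := by
  set m : ℝ := 4 * 2 ^ n
  have hm : 0 < m := by positivity
  have hw : (ρ / 4 / 2 ^ n / 2) ^ (-α) = ρ ^ (-α) * 2 ^ α * m ^ α := by
    rw [show ρ / 4 / 2 ^ n / 2 = ρ * (2 * m)⁻¹ by field_simp; ring,
      Real.mul_rpow hρ.le (by positivity), Real.inv_rpow (by positivity),
      Real.rpow_neg (by positivity : (0 : ℝ) ≤ 2 * m), inv_inv, Real.mul_rpow zero_le_two hm.le]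
    ring
  have hτ : (ρ / 4 / 2 ^ n / ρ) ^ β = m ^ (-β) := by
    rw [show ρ / 4 / 2 ^ n / ρ = m⁻¹ by simp only [m]; field_simp, Real.inv_rpow hm.le,
      Real.rpow_neg hm.le]
  have h2n : (0 : ℝ) < 2 ^ n := by positivity
  calc (ρ / 4 / 2 ^ n / 2) ^ (-α) * (ρ / 4 / 2 ^ n / ρ) ^ β
      = ρ ^ (-α) * 2 ^ α * m ^ (α - β) := by
        rw [hw, hτ, mul_assoc _ (m ^ α), ← Real.rpow_add hm, sub_eq_add_neg]
    _ ≤ ρ ^ (-α) * 2 ^ α * ((2 : ℝ) ^ n) ^ (α - β) :=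
        mul_le_mul_of_nonneg_left (Real.rpow_le_rpow_of_nonpos h2n
          (by simp only [m]; linarith) (by linarith)) (by positivity)
    _ = ρ ^ (-α) * 2 ^ α * ((2 : ℝ) ^ (α - β)) ^ n := by rw [Real.rpow_pow_comm zero_le_two]

/-- The term `4 ^ α` accounts for the region `infDist > ρ / 4`, the geometric series for the
shells `infDistShell E (ρ / 4 / 2 ^ n)`. -/
noncomputable def aikawaShellConst (α β : ℝ) (A : ℝ≥0) : ℝ :=
  4 ^ α + A * 2 ^ α * (1 - 2 ^ (α - β))⁻¹

lemma aikawaShellConst_nonneg {α β : ℝ} (hαβ : α < β) (A : ℝ≥0) :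
    0 ≤ aikawaShellConst α β A := by
  have : (2 : ℝ) ^ (α - β) < 1 := Real.rpow_lt_one_of_one_lt_of_neg one_lt_two (by linarith)
  have : 0 ≤ (1 - (2 : ℝ) ^ (α - β))⁻¹ := inv_nonneg.2 (by linarith)
  unfold aikawaShellConst
  positivity

variable [MeasurableSpace X] {μ : Measure X}

def IsDoublingOnBalls (μ : Measure X) (C : ℝ≥0) : Prop :=
  ∀ (x : X) (ρ : ℝ), 0 < ρ → μ (ball x (2 * ρ)) ≤ C * μ (ball x ρ)

lemma IsDoublingOnBalls.measure_ball_two_pow_mul_le {C : ℝ≥0} (hd : IsDoublingOnBalls μ C)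
    (x : X) {ρ : ℝ} (hρ : 0 < ρ) (n : ℕ) :
    μ (ball x (2 ^ n * ρ)) ≤ (C : ℝ≥0∞) ^ n * μ (ball x ρ) := by
  induction n with
  | zero => simp
  | succ n ih =>
    calc μ (ball x (2 ^ (n + 1) * ρ)) = μ (ball x (2 * (2 ^ n * ρ))) := by ring_nf
      _ ≤ C * μ (ball x (2 ^ n * ρ)) := hd x _ (by positivity)
      _ ≤ C * ((C : ℝ≥0∞) ^ n * μ (ball x ρ)) := by gcongr
      _ = (C : ℝ≥0∞) ^ (n + 1) * μ (ball x ρ) := by rw [pow_succ', mul_assoc]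

lemma setLIntegral_infDist_rpow_le_of_lt {E T : Set X} {α t : ℝ} (hα : 0 ≤ α) (ht : 0 < t)
    (hT : ∀ y ∈ T, t < infDist y E) :
    ∫⁻ y in T, ENNReal.ofReal (infDist y E ^ (-α)) ∂μ ≤ ENNReal.ofReal (t ^ (-α)) * μ T :=
  (setLIntegral_mono measurable_const fun y hy => ENNReal.ofReal_le_ofReal
    (Real.rpow_le_rpow_of_nonpos ht (hT y hy).le (neg_nonpos.2 hα))).trans_eq
    (setLIntegral_const _ _)

lemma setLIntegral_infDist_rpow_le {E S : Set X} {α s : ℝ} (hα : 0 ≤ α) (hs : 0 < s)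
    (hS : ∀ y ∈ S, 0 < infDist y E) :
    ∫⁻ y in S, ENNReal.ofReal (infDist y E ^ (-α)) ∂μ ≤
      ENNReal.ofReal (s ^ (-α)) * μ S +
        ∑' n : ℕ, ENNReal.ofReal ((s / 2 ^ n / 2) ^ (-α)) *
          μ (S ∩ infDistShell E (s / 2 ^ n)) := by
  have hcover : S ⊆ {y ∈ S | s < infDist y E} ∪ ⋃ n : ℕ, S ∩ infDistShell E (s / 2 ^ n) := by
    intro y hy
    rcases lt_or_ge s (infDist y E) with h | h
    · exact Or.inl ⟨hy, h⟩
    · obtain ⟨n, hn⟩ := exists_mem_infDistShell_div_pow (hS y hy) h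
      exact Or.inr (mem_iUnion.2 ⟨n, hy, hn⟩)
  calc _ ≤ _ := lintegral_mono_set hcover
    _ ≤ _ := lintegral_union_le _ _ _
    _ ≤ _ := by
      gcongr
      · exact (setLIntegral_infDist_rpow_le_of_lt hα hs fun y hy => hy.2).trans
          (by gcongr; exact fun y hy => hy.1)
      · exact (lintegral_iUnion_le _ _).trans (ENNReal.tsum_le_tsum fun n =>
          setLIntegral_infDist_rpow_le_of_lt hα (by positivity) fun y hy => hy.2.1)

lemma setLIntegral_infDist_rpow_le_of_forall_measure_infDistShell_le {E S : Set X}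
    {α β ρ : ℝ} {A : ℝ≥0} {M : ℝ≥0∞} (hα : 0 ≤ α) (hαβ : α < β) (hρ : 0 < ρ)
    (hS : ∀ y ∈ S, 0 < infDist y E) (hSM : μ S ≤ M)
    (hshell : ∀ n : ℕ, μ (S ∩ infDistShell E (ρ / 4 / 2 ^ n)) ≤
      A * ENNReal.ofReal ((ρ / 4 / 2 ^ n / ρ) ^ β) * M) :
    ∫⁻ y in S, ENNReal.ofReal (infDist y E ^ (-α)) ∂μ ≤
      ENNReal.ofReal (ρ ^ (-α) * aikawaShellConst α β A) * M := by
  set q : ℝ := 2 ^ (α - β)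
  have hq0 : 0 ≤ q := by positivity
  have hq1 : q < 1 := Real.rpow_lt_one_of_one_lt_of_neg one_lt_two (by linarith)
  have hgeom : ∑' n : ℕ, ENNReal.ofReal (ρ ^ (-α) * 2 ^ α * q ^ n) =
      ENNReal.ofReal (ρ ^ (-α) * 2 ^ α * (1 - q)⁻¹) := by
    rw [← ENNReal.ofReal_tsum_of_nonneg (fun n => by positivity)
      ((summable_geometric_of_lt_one hq0 hq1).mul_left _), tsum_mul_left,
      tsum_geometric_of_lt_one hq0 hq1]
  calc _ ≤ ENNReal.ofReal ((ρ / 4) ^ (-α)) * μ S +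
        ∑' n : ℕ, ENNReal.ofReal ((ρ / 4 / 2 ^ n / 2) ^ (-α)) *
          μ (S ∩ infDistShell E (ρ / 4 / 2 ^ n)) :=
        setLIntegral_infDist_rpow_le hα (by positivity) hS
    _ ≤ ENNReal.ofReal ((ρ / 4) ^ (-α)) * M +
        ∑' n : ℕ, ENNReal.ofReal ((ρ / 4 / 2 ^ n / 2) ^ (-α)) *
          (A * ENNReal.ofReal ((ρ / 4 / 2 ^ n / ρ) ^ β) * M) := by
        gcongr with n
        exact hshell n
    _ = ENNReal.ofReal ((ρ / 4) ^ (-α)) * M + A * M * ∑' n : ℕ,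
          ENNReal.ofReal ((ρ / 4 / 2 ^ n / 2) ^ (-α) * (ρ / 4 / 2 ^ n / ρ) ^ β) := by
        rw [← ENNReal.tsum_mul_left]
        congr 1
        refine tsum_congr fun n => ?_
        rw [ENNReal.ofReal_mul (by positivity)]
        ring
    _ ≤ ENNReal.ofReal (ρ ^ (-α) * 4 ^ α) * M +
          A * M * ENNReal.ofReal (ρ ^ (-α) * 2 ^ α * (1 - q)⁻¹) := by
        rw [← hgeom, Real.div_rpow hρ.le zero_le_four, Real.rpow_neg zero_le_four,
          div_inv_eq_mul]
        exact add_le_add le_rfl (mul_le_mul_right (ENNReal.tsum_le_tsum fun n =>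
          ENNReal.ofReal_le_ofReal (infDistShell_weight_le hαβ.le hρ n)) _)
    _ = ENNReal.ofReal (ρ ^ (-α) * aikawaShellConst α β A) * M := by
        have : 0 ≤ (1 - q)⁻¹ := inv_nonneg.2 (by linarith)
        rw [aikawaShellConst, mul_add, ENNReal.ofReal_add (by positivity) (by positivity),
          show ρ ^ (-α) * (A * 2 ^ α * (1 - q)⁻¹) = A * (ρ ^ (-α) * 2 ^ α * (1 - q)⁻¹) by ring,
          ENNReal.ofReal_mul A.coe_nonneg, ENNReal.ofReal_coe_nnreal]
        ring

lemma exists_infDistShell_measure_ge {E S : Set X} {α β ε ρ : ℝ} {A : ℝ≥0} {M : ℝ≥0∞}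
    (hα : 0 ≤ α) (hαβ : α < β) (hε : 0 < ε) (hεA : ε * aikawaShellConst α β A < 1)
    (hρ : 0 < ρ) (hS : ∀ y ∈ S, 0 < infDist y E) (hSM : μ S ≤ M) (hM0 : M ≠ 0) (hM : M ≠ ⊤)
    (hint : ENNReal.ofReal (ρ ^ (-α) / ε) * M ≤
      ∫⁻ y in S, ENNReal.ofReal (infDist y E ^ (-α)) ∂μ) :
    ∃ n : ℕ, A * ENNReal.ofReal ((ρ / 4 / 2 ^ n / ρ) ^ β) * M ≤
      μ (S ∩ infDistShell E (ρ / 4 / 2 ^ n)) := by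
  by_contra! hlight
  have hupper := setLIntegral_infDist_rpow_le_of_forall_measure_infDistShell_le hα hαβ hρ hS hSM
    fun n => (hlight n).le
  have hlt : ρ ^ (-α) * aikawaShellConst α β A < ρ ^ (-α) / ε := by
    rw [lt_div_iff₀ hε, mul_assoc]
    exact mul_lt_of_lt_one_right (by positivity) (by linarith)
  exact (hint.trans hupper).not_gt ((ENNReal.mul_lt_mul_iff_left hM0 hM).2
    ((ENNReal.ofReal_lt_ofReal_iff (by positivity)).2 hlt))

lemma IsDoublingOnBalls.mul_measure_le_of_forall_le_measure_inter_ball [OpensMeasurableSpace X]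
    {C : ℝ≥0} (hd : IsDoublingOnBalls μ C)
    (hball : ∀ (x : X) (ρ : ℝ), 0 < ρ → 0 < μ (ball x ρ) ∧ μ (ball x ρ) < ⊤)
    {E F A : Set X} (hE : E.Nonempty) (hF : MeasurableSet F) {w : X} {ρ ρ' : ℝ} {a : ℝ≥0∞}
    (hρ' : 0 < ρ') (hρρ' : 4 * ρ' ≤ ρ) (hA : A ⊆ ball w ρ) (hAE : ∀ y ∈ A, infDist y E ≤ ρ')
    (hloc : ∀ x ∈ E, a * μ (ball x ρ') ≤ μ (F ∩ ball x (2 * ρ'))) :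
    a * μ A ≤ (C : ℝ≥0∞) ^ 4 * μ (F ∩ ball w (2 * ρ)) := by
  have hcenter : ∀ y ∈ A, ∃ x ∈ E, dist y x < 2 * ρ' := fun y hy =>
    (infDist_lt_iff hE).1 ((hAE y hy).trans_lt (by linarith))
  choose! c hcE hcy using hcenter
  obtain ⟨u, huA, hdisj, hcover⟩ :=
    Vitali.exists_disjoint_subfamily_covering_enlargement_closedBall
      A c (fun _ => 2 * ρ') (2 * ρ') (fun _ _ => le_rfl) 4 (by norm_num)
  have hsub : ∀ b ∈ u, closedBall (c b) (2 * ρ') ⊆ ball w (2 * ρ) := by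
    intro b hb
    refine closedBall_subset_ball' ?_
    linarith [dist_triangle (c b) b w, dist_comm (c b) b, hcy b (huA hb),
      mem_ball.1 (hA (huA hb))]
  have hu : u.Countable := hdisj.countable_of_measure_pos (fun _ _ => measurableSet_closedBall)
    (fun b _ => (hball (c b) (2 * ρ') (by positivity)).1.trans_le
      (measure_mono ball_subset_closedBall))
    (ne_top_of_le_ne_top (hball w (2 * ρ) (by linarith)).2.ne (measure_mono (iUnion₂_subset hsub)))
  have hAcover : A ⊆ ⋃ b ∈ u, ball (c b) (2 ^ 4 * ρ') := by
    intro y hy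
    obtain ⟨b, hb, hyb⟩ := hcover y hy
    exact mem_biUnion hb (closedBall_subset_ball (by linarith)
      (hyb (mem_closedBall.2 (hcy y hy).le)))
  calc a * μ A ≤ a * ∑' b : u, μ (ball (c b) (2 ^ 4 * ρ')) := by
        gcongr
        exact (measure_mono hAcover).trans (measure_biUnion_le μ hu _)
    _ ≤ a * ∑' b : u, (C : ℝ≥0∞) ^ 4 * μ (ball (c b) ρ') := by
        gcongr with b
        exact hd.measure_ball_two_pow_mul_le _ hρ' 4
    _ = (C : ℝ≥0∞) ^ 4 * ∑' b : u, a * μ (ball (c b) ρ') := by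
        rw [ENNReal.tsum_mul_left, ENNReal.tsum_mul_left]
        ring
    _ ≤ (C : ℝ≥0∞) ^ 4 * ∑' b : u, μ (F ∩ ball (c b) (2 * ρ')) := by
        gcongr with b
        exact hloc _ (hcE _ (huA b.2))
    _ = (C : ℝ≥0∞) ^ 4 * μ (⋃ b ∈ u, F ∩ ball (c b) (2 * ρ')) := by
        rw [measure_biUnion hu (hdisj.mono fun b => inter_subset_right.trans ball_subset_closedBall)
          fun b _ => hF.inter measurableSet_ball]
    _ ≤ (C : ℝ≥0∞) ^ 4 * μ (F ∩ ball w (2 * ρ)) := by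
        gcongr
        exact iUnion₂_subset fun b hb => inter_subset_inter_right _
          (ball_subset_closedBall.trans (hsub b hb))

def UpperAikawaEstimate (μ : Measure X) (E : Set X) (α ε δ : ℝ) : Prop :=
  ∀ z ∈ E, ∀ R : ℝ, 0 < R → ENNReal.ofReal R < diamBound E →
    ∀ K : Set X, MeasurableSet K →
      μ (ball z R \ K) ≤ ENNReal.ofReal δ * μ (ball z R) →
      ENNReal.ofReal (R ^ (-α) / ε) ≤
        (μ (ball z R))⁻¹ * ∫⁻ y in ball z R ∩ K, ENNReal.ofReal (infDist y E ^ (-α)) ∂μ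

def NbhdBallBound (μ : Measure X) (E : Set X) (β c r ρ : ℝ) : Prop :=
  ∀ w ∈ E, ENNReal.ofReal (c * (r / ρ) ^ β) * μ (ball w ρ) ≤
    μ ({y | infDist y E < r} ∩ ball w (2 * ρ))

lemma exists_infDistShell_measure_ge_of_upperAikawaEstimate [OpensMeasurableSpace X]
    {E : Set X} {α β ε δ r ρ : ℝ} {A : ℝ≥0} {w : X} (hα : 0 ≤ α) (hαβ : α < β) (hε : 0 < ε)
    (hεA : ε * aikawaShellConst α β A < 1) (haik : UpperAikawaEstimate μ E α ε δ) (hw : w ∈ E)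
    (hr : 0 < r) (hρ : 0 < ρ) (hρD : ENNReal.ofReal ρ < diamBound E)
    (hB0 : μ (ball w ρ) ≠ 0) (hB : μ (ball w ρ) ≠ ⊤)
    (hthin : μ ({y | infDist y E < r} ∩ ball w ρ) ≤ ENNReal.ofReal δ * μ (ball w ρ)) :
    ∃ n : ℕ, A * ENNReal.ofReal ((ρ / 4 / 2 ^ n / ρ) ^ β) * μ (ball w ρ) ≤
      μ (ball w ρ ∩ {y | r ≤ infDist y E} ∩ infDistShell E (ρ / 4 / 2 ^ n)) := by
  have hK : MeasurableSet {y | r ≤ infDist y E} :=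
    measurableSet_le measurable_const (continuous_infDist_pt E).measurable
  refine exists_infDistShell_measure_ge hα hαβ hε hεA hρ (fun y hy => hr.trans_le hy.2)
    (measure_mono inter_subset_left) hB0 hB ?_
  rw [mul_comm, ENNReal.mul_le_iff_le_inv hB0 hB]
  refine haik w hw ρ hρ hρD _ hK (le_of_eq_of_le ?_ hthin)
  congr 1
  ext y
  simp [and_comm]

lemma IsDoublingOnBalls.ofReal_mul_measure_ball_le_of_le_measure [OpensMeasurableSpace X]
    {C : ℝ≥0} (hd : IsDoublingOnBalls μ C) (hC : C ≠ 0)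
    (hball : ∀ (x : X) (ρ : ℝ), 0 < ρ → 0 < μ (ball x ρ) ∧ μ (ball x ρ) < ⊤)
    {E A : Set X} {β δ r ρ ρ' : ℝ} {w : X} (hw : w ∈ E) (hδ : 0 ≤ δ) (hr : 0 ≤ r)
    (hρ : 0 < ρ) (hρ' : 0 < ρ') (hρρ' : 4 * ρ' ≤ ρ) (hA : A ⊆ ball w ρ) (hAE : ∀ y ∈ A, infDist y E ≤ ρ')
    (hAμ : (↑(C ^ 4) : ℝ≥0∞) * ENNReal.ofReal ((ρ' / ρ) ^ β) * μ (ball w ρ) ≤ μ A)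
    (hbound : NbhdBallBound μ E β δ r ρ') :
    ENNReal.ofReal (δ * (r / ρ) ^ β) * μ (ball w ρ) ≤
      μ ({y | infDist y E < r} ∩ ball w (2 * ρ)) := by
  have hcover := hd.mul_measure_le_of_forall_le_measure_inter_ball hball ⟨w, hw⟩
    (measurableSet_lt (continuous_infDist_pt E).measurable measurable_const) hρ' hρρ' hA hAE
    hbound
  have hsplit : δ * (r / ρ) ^ β = δ * (r / ρ') ^ β * (ρ' / ρ) ^ β := by
    rw [mul_assoc, ← Real.mul_rpow (by positivity) (by positivity), div_mul_div_cancel₀ hρ'.ne']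
  have hC4 : (↑(C ^ 4) : ℝ≥0∞) ≠ 0 := by simpa using pow_ne_zero 4 hC
  refine (ENNReal.mul_le_mul_iff_right hC4 ENNReal.coe_ne_top).1 ?_
  calc (↑(C ^ 4) : ℝ≥0∞) * (ENNReal.ofReal (δ * (r / ρ) ^ β) * μ (ball w ρ))
      = ENNReal.ofReal (δ * (r / ρ') ^ β) *
          (↑(C ^ 4) * ENNReal.ofReal ((ρ' / ρ) ^ β) * μ (ball w ρ)) := by
        rw [hsplit, ENNReal.ofReal_mul (by positivity)]
        ring
    _ ≤ ENNReal.ofReal (δ * (r / ρ') ^ β) * μ A := by gcongr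
    _ ≤ _ := by simpa using hcover

lemma IsDoublingOnBalls.nbhdBallBound_of_forall_le_quarter [OpensMeasurableSpace X] {C : ℝ≥0}
    (hd : IsDoublingOnBalls μ C) (hC : C ≠ 0)
    (hball : ∀ (x : X) (ρ : ℝ), 0 < ρ → 0 < μ (ball x ρ) ∧ μ (ball x ρ) < ⊤)
    {E : Set X} {α β ε δ r ρ : ℝ} (hα : 0 ≤ α) (hαβ : α < β) (hε : 0 < ε)
    (hεC : ε * aikawaShellConst α β (C ^ 4) < 1) (hδ : 0 ≤ δ)
    (haik : UpperAikawaEstimate μ E α ε δ) (hr : 0 < r) (hrρ : r ≤ ρ)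
    (hρD : ENNReal.ofReal ρ < diamBound E)
    (ih : ∀ ρ', r ≤ ρ' → 4 * ρ' ≤ ρ → NbhdBallBound μ E β δ r ρ') :
    NbhdBallBound μ E β δ r ρ := by
  intro w hw
  set F := {y | infDist y E < r}
  have hρ : 0 < ρ := hr.trans_le hrρ
  obtain ⟨hB0, hBtop⟩ := hball w ρ hρ
  rcases le_or_gt (ENNReal.ofReal δ * μ (ball w ρ)) (μ (F ∩ ball w ρ)) with hthick | hthin
  · have hβ : 0 ≤ β := hα.trans hαβ.le
    calc ENNReal.ofReal (δ * (r / ρ) ^ β) * μ (ball w ρ) ≤ ENNReal.ofReal δ * μ (ball w ρ) := by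
          gcongr
          exact mul_le_of_le_one_right hδ
            (Real.rpow_le_one (by positivity) (div_le_one_of_le₀ hrρ hρ.le) hβ)
      _ ≤ μ (F ∩ ball w ρ) := hthick
      _ ≤ μ (F ∩ ball w (2 * ρ)) := by gcongr; linarith
  obtain ⟨n, hn⟩ := exists_infDistShell_measure_ge_of_upperAikawaEstimate hα hαβ hε hεC haik hw
    hr hρ hρD hB0.ne' hBtop.ne hthin.le
  set ρ' := ρ / 4 / 2 ^ n
  have hρ' : 0 < ρ' := by positivity
  have hρρ' : 4 * ρ' ≤ ρ := by
    have : (1 : ℝ) ≤ 2 ^ n := one_le_pow₀ one_le_two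
    simp only [ρ']
    rw [div_div, mul_div_assoc', div_le_iff₀ (by positivity)]
    nlinarith
  have hn0 : (↑(C ^ 4) : ℝ≥0∞) * ENNReal.ofReal ((ρ' / ρ) ^ β) * μ (ball w ρ) ≠ 0 := by
    simp [hC, hB0.ne', Real.rpow_pos_of_pos (div_pos hρ' hρ)]
  obtain ⟨y, ⟨-, hyr⟩, hyρ'⟩ := nonempty_of_measure_ne_zero (ne_bot_of_le_ne_bot hn0 hn)
  exact hd.ofReal_mul_measure_ball_le_of_le_measure hC hball hw hδ hr.le hρ hρ' hρρ'
    (inter_subset_left.trans inter_subset_left) (fun y hy => hy.2.2) hn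
    (ih ρ' (hyr.trans hyρ'.2) hρρ')

lemma IsDoublingOnBalls.nbhdBallBound_of_upperAikawaEstimate [OpensMeasurableSpace X]
    {C : ℝ≥0} (hd : IsDoublingOnBalls μ C) (hC : C ≠ 0)
    (hball : ∀ (x : X) (ρ : ℝ), 0 < ρ → 0 < μ (ball x ρ) ∧ μ (ball x ρ) < ⊤)
    {E : Set X} {α β ε δ r ρ : ℝ} (hα : 0 ≤ α) (hαβ : α < β) (hε : 0 < ε)
    (hεC : ε * aikawaShellConst α β (C ^ 4) < 1) (hδ : 0 ≤ δ)
    (haik : UpperAikawaEstimate μ E α ε δ) (hr : 0 < r) (hrρ : r ≤ ρ)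
    (hρD : ENNReal.ofReal ρ < diamBound E) : NbhdBallBound μ E β δ r ρ := by
  obtain ⟨k, hk⟩ := pow_unbounded_of_one_lt (ρ / r) one_lt_two
  rw [div_lt_iff₀ hr] at hk
  induction k generalizing ρ with
  | zero => exact absurd hrρ (by simpa using hk)
  | succ k ih =>
    refine hd.nbhdBallBound_of_forall_le_quarter hC hball hα hαβ hε hεC hδ haik hr hrρ hρD
      fun ρ' hrρ' hρρ' => ih hrρ' ((ENNReal.ofReal_le_ofReal (by linarith)).trans_lt hρD) ?_
    rw [pow_succ] at hk
    linarith

theorem IsDoublingOnBalls.upperAssouadCodim_le_of_upperAikawaCond [OpensMeasurableSpace X]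
    {C : ℝ≥0} (hd : IsDoublingOnBalls μ C) (hC : C ≠ 0)
    (hball : ∀ (x : X) (ρ : ℝ), 0 < ρ → 0 < μ (ball x ρ) ∧ μ (ball x ρ) < ⊤)
    {E : Set X} {α β : ℝ} (hα : 0 ≤ α) (hαβ : α < β) (haik : upperAikawaCond μ E α) :
    upperAssouadCodim μ E ≤ β := by
  set Λ := aikawaShellConst α β (C ^ 4)
  have hΛ : 0 ≤ Λ := aikawaShellConst_nonneg hαβ _
  obtain ⟨δ, hδ, haikδ⟩ : ∃ δ, 0 < δ ∧ UpperAikawaEstimate μ E α (Λ + 1)⁻¹ δ :=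
    haik (Λ + 1)⁻¹ (by positivity)
  have hεΛ : (Λ + 1)⁻¹ * Λ < 1 := by
    rw [inv_mul_lt_iff₀ (by positivity)]
    linarith
  have hβ : 0 ≤ β := hα.trans hαβ.le
  refine csInf_le ⟨0, fun _ hQ => hQ.1⟩ ⟨hβ, δ / C, by positivity, fun z hz r R hr hrR hRD => ?_⟩
  have hR : 0 < R := hr.trans hrR
  set r' := min r (R / 2)
  have hbound := hd.nbhdBallBound_of_upperAikawaEstimate hC hball hα hαβ (by positivity) hεΛ
    hδ.le haikδ (lt_min hr (by positivity)) (min_le_right _ (R / 2))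
    ((ENNReal.ofReal_le_ofReal (by linarith)).trans_lt hRD) z hz
  rw [mul_div_cancel₀ R two_ne_zero] at hbound
  have hratio : r / R ≤ r' / (R / 2) := by
    rw [le_div_iff₀ (by positivity), show r / R * (R / 2) = r / 2 by field_simp]
    exact le_min (by linarith) (by linarith)
  calc ENNReal.ofReal (δ / C * (r / R) ^ β) * μ (ball z R)
      ≤ ENNReal.ofReal (δ / C * (r / R) ^ β) * (C * μ (ball z (R / 2))) := by
        gcongr
        simpa [mul_div_cancel₀ R two_ne_zero] using hd z (R / 2) (by positivity)
    _ = ENNReal.ofReal (δ * (r / R) ^ β) * μ (ball z (R / 2)) := by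
        rw [← mul_assoc, ← ENNReal.ofReal_coe_nnreal, ← ENNReal.ofReal_mul (by positivity)]
        congr 2
        field_simp [NNReal.coe_ne_zero.2 hC]
    _ ≤ ENNReal.ofReal (δ * (r' / (R / 2)) ^ β) * μ (ball z (R / 2)) := by gcongr
    _ ≤ μ ({y | infDist y E < r'} ∩ ball z R) := hbound
    _ ≤ μ ({x | infDist x E < r} ∩ ball z R) :=
        measure_mono (inter_subset_inter_left _ fun y (hy : infDist y E < r') =>
          hy.trans_le (min_le_left _ _))

end

theorem upperAssouadCodim_le_of_upperAikawa_general {X : Type*} [MetricSpace X] [MeasurableSpace X]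
    [BorelSpace X]
    (μ : Measure X) (c_μ : ℝ) (hc : 1 < c_μ)
    (hball : ∀ (x : X) (ρ : ℝ), 0 < ρ → 0 < μ (ball x ρ) ∧ μ (ball x ρ) < ⊤)
    (hdoubling : ∀ (x : X) (ρ : ℝ), 0 < ρ →
      μ (ball x (2 * ρ)) ≤ ENNReal.ofReal c_μ * μ (ball x ρ))
    (q p s : ℝ) (hq : 1 < q) (hqp : q < p) (hs0 : 0 < s)
    (E : Set X)
    (haik : upperAikawaCond μ E (s * q)) :
    upperAssouadCodim μ E ≤ s * p :=
  IsDoublingOnBalls.upperAssouadCodim_le_of_upperAikawaCond (C := c_μ.toNNReal) hdoubling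
    (Real.toNNReal_pos.2 (by linarith)).ne' hball (by positivity)
    (mul_lt_mul_of_pos_left hqp hs0) haik

/-- If a nonempty set `E` satisfies the upper Aikawa condition with exponent `α = sq`
(`1 < q < p < ∞`, `0 < s < 1`), then the upper Assouad codimension of `E` is at most `sp`. -/
theorem upperAssouadCodim_le_of_upperAikawa {X : Type*} [MetricSpace X] [MeasurableSpace X]
    [BorelSpace X] [Nontrivial X]
    (μ : Measure X) (c_μ : ℝ) (hc : 1 < c_μ)
    (hball : ∀ (x : X) (ρ : ℝ), 0 < ρ → 0 < μ (ball x ρ) ∧ μ (ball x ρ) < ⊤)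
    (hdoubling : ∀ (x : X) (ρ : ℝ), 0 < ρ →
      μ (ball x (2 * ρ)) ≤ ENNReal.ofReal c_μ * μ (ball x ρ))
    (q p s : ℝ) (hq : 1 < q) (hqp : q < p) (hs0 : 0 < s) (hs1 : s < 1)
    (E : Set X) (hE : E.Nonempty)
    (haik : upperAikawaCond μ E (s * q)) :
    upperAssouadCodim μ E ≤ s * p :=
  upperAssouadCodim_le_of_upperAikawa_general μ c_μ hc hball hdoubling q p s hq hqp hs0 E haik
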